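/- If P : C^op → InfSL is a primary doctrine on a category C with finite products and Λ is the class of product projections, then P^∃ : C^op → InfSL is an existential doctrine: every reindexing along a projection has a left adjoint, and these adjoints satisfy Beck–Chevalley for pullbacks of projections and Frobenius reciprocity. -/

import Mathlib

/-!
In `P^∃`, the left adjoint `∃_f` is post-composition with `f` and reindexing along `f` is
pullback along `f`, so the adjunction `∃_f ⊣ f^*` is the universal property of the pullback.
For Beck–Chevalley and Frobenius reciprocity, the pasting lemma shows that the objects carrying
the two sides are pullbacks of one and the same cospan; the comparison isomorphism between them
matches the predicates, so the two sides are equivalent.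
-/

open CategoryTheory Limits

universe w v u

/-- A primary doctrine: a contravariant assignment of inf-semilattices with top
to objects of `C`, functorial and meet/top-preserving on morphisms. -/
structure PrimaryDoctrine (C : Type u) [Category.{v} C] where
  P : C → Type w
  [instInf : ∀ A, SemilatticeInf (P A)]
  [instTop : ∀ A, OrderTop (P A)]
  map : ∀ {A B : C}, (A ⟶ B) → P B → P A
  map_id : ∀ (A : C) (α : P A), map (𝟙 A) α = α
  map_comp : ∀ {A B D : C} (f : A ⟶ B) (g : B ⟶ D) (α : P D),
    map (f ≫ g) α = map f (map g α)
  map_mono : ∀ {A B : C} (f : A ⟶ B), Monotone (map f)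
  map_top : ∀ {A B : C} (f : A ⟶ B), map f ⊤ = ⊤
  map_inf : ∀ {A B : C} (f : A ⟶ B) (α β : P B), map f (α ⊓ β) = map f α ⊓ map f β

attribute [instance] PrimaryDoctrine.instInf PrimaryDoctrine.instTop

/-- A class `Λ` of morphisms containing identities, closed under composition,
and closed under (chosen) pullbacks along arbitrary morphisms. -/
structure LambdaClass (C : Type u) [Category.{v} C] where
  mem : ∀ {X Y : C}, (X ⟶ Y) → Prop
  id_mem : ∀ X : C, mem (𝟙 X)
  comp_mem : ∀ {X Y Z : C} {f : X ⟶ Y} {g : Y ⟶ Z}, mem f → mem g → mem (f ≫ g)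
  pbObj : ∀ {X Y Z : C} (g : X ⟶ Z), mem g → ∀ _f : Y ⟶ Z, C
  pbFst : ∀ {X Y Z : C} (g : X ⟶ Z) (hg : mem g) (f : Y ⟶ Z), pbObj g hg f ⟶ X
  pbSnd : ∀ {X Y Z : C} (g : X ⟶ Z) (hg : mem g) (f : Y ⟶ Z), pbObj g hg f ⟶ Y
  isPB : ∀ {X Y Z : C} (g : X ⟶ Z) (hg : mem g) (f : Y ⟶ Z),
    IsPullback (pbFst g hg f) (pbSnd g hg f) g f
  pbSnd_mem : ∀ {X Y Z : C} (g : X ⟶ Z) (hg : mem g) (f : Y ⟶ Z), mem (pbSnd g hg f)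

variable {C : Type u} [Category.{v} C]

/-- An element of the fibre `P^∃(A)` of the existential completion:
a pair of a morphism `g : B ⟶ A` in `Λ` and `α ∈ P(B)`. -/
structure ExEl (P : PrimaryDoctrine C) (L : LambdaClass C) (A : C) where
  B : C
  g : B ⟶ A
  hg : L.mem g
  α : P.P B

variable {P : PrimaryDoctrine C} {L : LambdaClass C}

/-- The preorder on `P^∃(A)`. -/
def ExLe {A : C} (x y : ExEl P L A) : Prop :=
  ∃ w : x.B ⟶ y.B, w ≫ y.g = x.g ∧ x.α ≤ P.map w y.α

/-- Equivalence in the preorder `P^∃(A)`. -/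
def ExEquiv {A : C} (x y : ExEl P L A) : Prop := ExLe x y ∧ ExLe y x

/-- The top element `(id_A, ⊤_A)` of `P^∃(A)`. -/
def topE (P : PrimaryDoctrine C) (L : LambdaClass C) (A : C) : ExEl P L A :=
  ⟨A, 𝟙 A, L.id_mem A, ⊤⟩

/-- Reindexing `P^∃_f` along `f : A ⟶ B`, via the chosen pullback. -/
def reindex {A B : C} (f : A ⟶ B) (y : ExEl P L B) : ExEl P L A :=
  ⟨L.pbObj y.g y.hg f, L.pbSnd y.g y.hg f, L.pbSnd_mem y.g y.hg f,
   P.map (L.pbFst y.g y.hg f) y.α⟩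

/-- Binary infimum in `P^∃(A)`, constructed via the chosen pullback. -/
def infE {A : C} (x y : ExEl P L A) : ExEl P L A :=
  ⟨L.pbObj x.g x.hg y.g, L.pbFst x.g x.hg y.g ≫ x.g,
   (by rw [(L.isPB x.g x.hg y.g).w]
       exact L.comp_mem (L.pbSnd_mem x.g x.hg y.g) y.hg),
   P.map (L.pbFst x.g x.hg y.g) x.α ⊓ P.map (L.pbSnd x.g x.hg y.g) y.α⟩

/-- The left adjoint `∃^e_f` along `f ∈ Λ`, given by post-composition. -/
def existE {A B : C} (f : A ⟶ B) (hf : L.mem f) (x : ExEl P L A) : ExEl P L B :=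
  ⟨x.B, x.g ≫ f, L.comp_mem x.hg hf, x.α⟩

/-- The unit `ι_A : P(A) → P^∃(A)`, `α ↦ (id_A, α)`. -/
def iota (P : PrimaryDoctrine C) (L : LambdaClass C) (A : C) (α : P.P A) : ExEl P L A :=
  ⟨A, 𝟙 A, L.id_mem A, α⟩

theorem ExEquiv.of_iso {A : C} {x y : ExEl P L A} (e : x.B ≅ y.B) (hg : e.hom ≫ y.g = x.g)
    (hα : P.map e.hom y.α = x.α) : ExEquiv x y := by
  refine ⟨⟨e.hom, hg, hα.ge⟩, ⟨e.inv, by rw [← hg, e.inv_hom_id_assoc], ?_⟩⟩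
  rw [← hα, ← P.map_comp, e.inv_hom_id, P.map_id]

theorem exLe_existE_iff {A B : C} (f : A ⟶ B) (hf : L.mem f) (x : ExEl P L A)
    (y : ExEl P L B) : ExLe (existE f hf x) y ↔ ExLe x (reindex f y) := by
  have hpb := L.isPB y.g y.hg f
  constructor
  · rintro ⟨w, hw, hle⟩
    dsimp only [existE] at w hw hle
    refine ⟨hpb.lift w x.g hw, hpb.lift_snd _ _ _, ?_⟩
    dsimp only [reindex]
    rwa [← P.map_comp, hpb.lift_fst]
  · rintro ⟨w, hw, hle⟩
    dsimp only [reindex] at w hw hle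
    refine ⟨w ≫ L.pbFst y.g y.hg f, ?_, ?_⟩
    · dsimp only [existE]
      rw [Category.assoc, hpb.w, ← Category.assoc, hw]
    · dsimp only [existE]
      rwa [P.map_comp]

theorem existE_reindex_exEquiv_reindex_existE {X' A' X A : C} {g' : X' ⟶ A'} {f' : X' ⟶ X}
    {f : A' ⟶ A} {g : X ⟶ A} (hg : L.mem g) (hg' : L.mem g') (hpb : IsPullback g' f' f g)
    (β : ExEl P L X) :
    ExEquiv (existE g' hg' (reindex f' β)) (reindex f (existE g hg β)) := by
  have hpasted := (L.isPB β.g β.hg f').paste_vert hpb.flip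
  let e := hpasted.isoIsPullback _ _ (L.isPB (β.g ≫ g) (L.comp_mem β.hg hg) f)
  refine ExEquiv.of_iso e (hpasted.isoIsPullback_hom_snd _ _ _) ?_
  dsimp only [existE, reindex]
  rw [← P.map_comp, hpasted.isoIsPullback_hom_fst]

theorem existE_infE_reindex_exEquiv {X A : C} (f : X ⟶ A) (hf : L.mem f) (a : ExEl P L A)
    (b : ExEl P L X) : ExEquiv (existE f hf (infE (reindex f a) b)) (infE a (existE f hf b)) := by
  have hS := L.isPB a.g a.hg f
  have hpasted := (L.isPB (L.pbSnd a.g a.hg f) (L.pbSnd_mem a.g a.hg f) b.g).paste_horiz hS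
  let e := hpasted.isoIsPullback _ _ (L.isPB a.g a.hg (b.g ≫ f))
  refine ExEquiv.of_iso e ?_ ?_
  · dsimp only [existE, reindex, infE]
    rw [hpasted.isoIsPullback_hom_fst_assoc, Category.assoc, Category.assoc, hS.w]
  · refine (P.map_inf e.hom _ _).trans ?_
    dsimp only [existE, reindex, infE]
    rw [← P.map_comp, ← P.map_comp, ← P.map_comp, hpasted.isoIsPullback_hom_fst,
      hpasted.isoIsPullback_hom_snd]

/-- With `Λ` the class of product projections, the existential completion `P^∃`
is an existential doctrine: reindexing along any projection has a left adjoint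
(given by post-composition), and these satisfy Beck–Chevalley for pullbacks of
morphisms of `Λ` and Frobenius reciprocity. -/
theorem existential_completion_is_existential [HasFiniteProducts C]
    (P : PrimaryDoctrine C) (L : LambdaClass C)
    (hproj : ∀ A B : C, L.mem (prod.fst : A ⨯ B ⟶ A)) :
    (∀ (A B : C) (x : ExEl P L (A ⨯ B)) (y : ExEl P L A),
      ExLe (existE prod.fst (hproj A B) x) y ↔ ExLe x (reindex prod.fst y)) ∧
    (∀ {X' A' X A : C} (g' : X' ⟶ A') (f' : X' ⟶ X) (f : A' ⟶ A) (g : X ⟶ A)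
      (hg : L.mem g) (hg' : L.mem g'), IsPullback g' f' f g →
      ∀ β : ExEl P L X,
        ExEquiv (existE g' hg' (reindex f' β)) (reindex f (existE g hg β))) ∧
    (∀ {X A : C} (f : X ⟶ A) (hf : L.mem f) (a : ExEl P L A) (b : ExEl P L X),
      ExEquiv (existE f hf (infE (reindex f a) b)) (infE a (existE f hf b))) :=
  ⟨fun A B => exLe_existE_iff prod.fst (hproj A B),
    fun _ _ _ _ hg hg' => existE_reindex_exEquiv_reindex_existE hg hg',
    existE_infE_reindex_exEquiv⟩
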